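/- Let G be a bridgeless cubic graph with even factor F, and let C5 = v1v2v3v4v5 be a chordless 5-circuit such that the four boundary edges at v1, v2, v3, v4 belong to F and lie in two distinct circuits C1, C2, with v2v3 ∈ C1 (hence v1v5, v5v4 ∈ C2). Then F' = (F − E(C5)) ∪ {v1v2, v3v4} is an even factor merging C1 and C2 into one circuit, with v5 becoming an isolated vertex bounded to the merged circuit, and c(F) − c(F') = 1. -/

import Mathlib

open SimpleGraph

variable {V : Type*}

noncomputable def deg (F : SimpleGraph V) (v : V) : ℕ := Nat.card (F.neighborSet v)

def IsCubic (G : SimpleGraph V) : Prop := ∀ v, deg G v = 3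

def Bridgeless (G : SimpleGraph V) : Prop := ∀ e : Sym2 V, ¬ G.IsBridge e

def IsEvenFactor (G F : SimpleGraph V) : Prop := F ≤ G ∧ ∀ v, deg F v = 0 ∨ deg F v = 2

def Is2Factor (G F : SimpleGraph V) : Prop := F ≤ G ∧ ∀ v, deg F v = 2

noncomputable def numIso (F : SimpleGraph V) : ℕ := Nat.card {v : V // deg F v = 0}

def IsCircuitOf (F : SimpleGraph V) (C : Set V) : Prop :=
  ∃ v, deg F v ≠ 0 ∧ C = {u | F.Reachable v u}

noncomputable def numCirc (F : SimpleGraph V) : ℕ := Nat.card {C : Set V // IsCircuitOf F C}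

noncomputable def cost [Fintype V] (F : SimpleGraph V) : ℝ :=
  (Fintype.card V : ℝ) + 2 * (numCirc F : ℝ) + (numIso F : ℝ)

def bdry (G : SimpleGraph V) (S : Set V) : Set (Sym2 V) :=
  {e | ∃ u v, e = s(u, v) ∧ G.Adj u v ∧ u ∈ S ∧ v ∉ S}

noncomputable def bdryCard (G : SimpleGraph V) (S : Set V) : ℕ := Nat.card ↥(bdry G S)

noncomputable def bdryCount (G F : SimpleGraph V) (S : Set V) : ℕ :=
  Nat.card ↥(bdry G S ∩ F.edgeSet)
inductive BoundedTo (G F : SimpleGraph V) (C : Set V) : V → Prop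
  | two_in (v a b : V) (h0 : deg F v = 0) (hab : a ≠ b) (ha : G.Adj v a) (hb : G.Adj v b)
      (haC : a ∈ C) (hbC : b ∈ C) : BoundedTo G F C v
  | one_one (v a b : V) (h0 : deg F v = 0) (hab : a ≠ b) (ha : G.Adj v a) (hb : G.Adj v b)
      (haC : a ∈ C) (hb0 : deg F b = 0) (hbB : BoundedTo G F C b) : BoundedTo G F C v
  | two_iso (v a b : V) (h0 : deg F v = 0) (hab : a ≠ b) (ha : G.Adj v a) (hb : G.Adj v b)
      (ha0 : deg F a = 0) (haB : BoundedTo G F C a) (hb0 : deg F b = 0)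
      (hbB : BoundedTo G F C b) : BoundedTo G F C v


lemma deg_eq_ncard (F : SimpleGraph V) (v : V) : deg F v = (F.neighborSet v).ncard :=
  Nat.card_coe_set_eq _

lemma deg_ne_zero_of_adj [Finite V] {F : SimpleGraph V} {v u : V} (h : F.Adj v u) :
    deg F v ≠ 0 := by
  rw [deg_eq_ncard]
  have h1 : 0 < (F.neighborSet v).ncard := (Set.ncard_pos (Set.toFinite _)).2 ⟨u, h⟩
  omega

lemma nb_pair [Finite V] {F : SimpleGraph V} {v a : V} (h2 : deg F v = 2)
    (ha : a ∈ F.neighborSet v) : ∃ b, b ≠ a ∧ F.neighborSet v = {a, b} := by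
  rw [deg_eq_ncard] at h2
  obtain ⟨x, y, hxy, hset⟩ := Set.ncard_eq_two.mp h2
  rw [hset] at ha
  rcases ha with rfl | rfl
  · exact ⟨y, hxy.symm, hset⟩
  · exact ⟨x, hxy, by rw [hset, Set.pair_comm]⟩

lemma reach_transfer_walk {G H : SimpleGraph V} {P : V → Prop}
    (hP : ∀ x y, P x → G.Adj x y → P y)
    (hadj : ∀ x y, P x → P y → G.Adj x y → H.Adj x y) :
    ∀ {a b : V}, G.Walk a b → P a → H.Reachable a b := by
  intro a b p
  induction p with
  | nil => exact fun _ => Reachable.refl _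
  | cons h q ih =>
    intro ha
    have hc := hP _ _ ha h
    exact (hadj _ _ ha hc h).reachable.trans (ih hc)

lemma reach_transfer {G H : SimpleGraph V} {P : V → Prop}
    (hP : ∀ x y, P x → G.Adj x y → P y)
    (hadj : ∀ x y, P x → P y → G.Adj x y → H.Adj x y)
    {a b : V} (ha : P a) (h : G.Reachable a b) : H.Reachable a b := by
  obtain ⟨p⟩ := h
  exact reach_transfer_walk hP hadj p ha

lemma reach_of_walk {G H : SimpleGraph V} :
    ∀ {a b : V} (p : G.Walk a b),
      (∀ x y, x ∈ p.support → y ∈ p.support → G.Adj x y → H.Adj x y) → H.Reachable a b := by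
  intro a b p
  induction p with
  | nil => exact fun _ => Reachable.refl _
  | @cons a c b h q ih =>
    intro hs
    refine (hs a c ?_ ?_ h).reachable.trans (ih fun x y hx hy => hs x y ?_ ?_)
    · simp [Walk.support_cons]
    · simp [Walk.support_cons, Walk.start_mem_support]
    · simp [Walk.support_cons, hx]
    · simp [Walk.support_cons, hy]

lemma reach_patch {G : SimpleGraph V} {u v : V}
    (hr : (G.deleteEdges {s(u, v)}).Reachable u v) :
    ∀ {a b : V}, G.Reachable a b → (G.deleteEdges {s(u, v)}).Reachable a b := by
  intro a b h
  obtain ⟨p⟩ := h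
  induction p with
  | nil => exact Reachable.refl _
  | @cons a c b h q ih =>
    by_cases he : s(a, c) = s(u, v)
    · rcases Sym2.eq_iff.mp he with ⟨rfl, rfl⟩ | ⟨rfl, rfl⟩
      · exact hr.trans ih
      · exact hr.symm.trans ih
    · exact (SimpleGraph.deleteEdges_adj.mpr ⟨h, by simp [he]⟩).reachable.trans ih

lemma circuit_eq {F : SimpleGraph V} {C : Set V} (h : IsCircuitOf F C) {w : V} (hw : w ∈ C) :
    C = {u | F.Reachable w u} := by
  obtain ⟨v, -, rfl⟩ := h
  have hv : F.Reachable v w := hw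
  ext u
  exact ⟨fun h' => hv.symm.trans h', fun h' => hv.trans h'⟩

lemma even_no_bridge [Fintype V] {F : SimpleGraph V}
    (hev : ∀ v, Even (deg F v)) {u v : V} (huv : F.Adj u v) :
    (F.deleteEdges {s(u, v)}).Reachable u v := by
  classical
  by_contra hr
  set H := F.deleteEdges {s(u, v)} with hH
  set S : Set V := {w | H.Reachable u w} with hS
  have hvS : v ∉ S := hr
  have huS : u ∈ S := Reachable.refl u
  have hclosed : ∀ x y, x ∈ S → H.Adj x y → y ∈ S := fun x y hx hxy => hx.trans hxy.reachable
  have hdegH : ∀ w, w ≠ u → w ≠ v → deg H w = deg F w := by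
    intro w hwu hwv
    have hnb : H.neighborSet w = F.neighborSet w := by
      ext y
      simp only [mem_neighborSet, hH, deleteEdges_adj, Set.mem_singleton_iff]
      constructor
      · rintro ⟨h, -⟩; exact h
      · intro h
        refine ⟨h, fun hc => ?_⟩
        rcases Sym2.eq_iff.mp hc with ⟨rfl, rfl⟩ | ⟨rfl, rfl⟩
        · exact hwu rfl
        · exact hwv rfl
    rw [deg, deg, hnb]
  have hdegu : deg H u + 1 = deg F u := by
    have hnb : H.neighborSet u = F.neighborSet u \ {v} := by
      ext y
      simp only [mem_neighborSet, hH, deleteEdges_adj, Set.mem_singleton_iff, Set.mem_diff]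
      constructor
      · rintro ⟨h, hne⟩
        exact ⟨h, fun hy => hne (by rw [hy])⟩
      · rintro ⟨h, hne⟩
        refine ⟨h, fun hc => ?_⟩
        rcases Sym2.eq_iff.mp hc with ⟨-, h2⟩ | ⟨h1, -⟩
        · exact hne h2
        · exact huv.ne h1
    rw [deg_eq_ncard, deg_eq_ncard, hnb]
    have h0 : (F.neighborSet u \ {v}).ncard = (F.neighborSet u).ncard - 1 :=
      Set.ncard_diff_singleton_of_mem huv
    have h1 : 0 < (F.neighborSet u).ncard := (Set.ncard_pos (Set.toFinite _)).2 ⟨v, huv⟩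
    omega
  have hdeg' : ∀ (x : S), (SimpleGraph.induce S H).degree x = deg H x.1 := by
    intro x
    have he : ((SimpleGraph.induce S H).neighborSet x) ≃ (H.neighborSet x.1) :=
      { toFun := fun y => ⟨y.1.1, y.2⟩
        invFun := fun z => ⟨⟨z.1, hclosed _ _ x.2 z.2⟩, z.2⟩
        left_inv := fun y => Subtype.ext (Subtype.ext rfl)
        right_inv := fun z => rfl }
    calc (SimpleGraph.induce S H).degree x
        = Fintype.card ((SimpleGraph.induce S H).neighborSet x) :=
          (card_neighborSet_eq_degree _ _).symm
      _ = Nat.card ((SimpleGraph.induce S H).neighborSet x) := Nat.card_eq_fintype_card.symm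
      _ = Nat.card (H.neighborSet x.1) := Nat.card_congr he
      _ = deg H x.1 := rfl
  have heven := (SimpleGraph.induce S H).even_card_odd_degree_vertices
  have hset : ({x : S | Odd ((SimpleGraph.induce S H).degree x)} : Finset S)
      = {(⟨u, huS⟩ : S)} := by
    ext x
    simp only [Finset.mem_filter, Finset.mem_univ, true_and, Finset.mem_singleton,
      Set.mem_setOf_eq]
    rw [hdeg' x]
    constructor
    · intro hodd
      by_contra hxu
      have hx1 : x.1 ≠ u := fun h => hxu (Subtype.ext h)
      have hx2 : x.1 ≠ v := fun h => hvS (h ▸ x.2)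
      rw [hdegH _ hx1 hx2] at hodd
      exact (Nat.not_odd_iff_even.mpr (hev x.1)) hodd
    · rintro rfl
      have h1 := hdegu
      have h2 := (Nat.even_iff).mp (hev u)
      have h3 : ((⟨u, huS⟩ : S) : V) = u := rfl
      rw [h3, Nat.odd_iff]
      omega
  rw [hset] at heven
  simp at heven

lemma exists_walk_avoiding {G : SimpleGraph V} {v : V} :
    ∀ {a b : V} (p : G.Walk a b), p.IsPath → b ≠ v →
      ∃ x, (x = a ∨ G.Adj v x) ∧ ∃ q : G.Walk x b, v ∉ q.support := by
  intro a b p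
  induction p with
  | nil =>
    intro _ hbv
    refine ⟨_, Or.inl rfl, Walk.nil, ?_⟩
    simp only [Walk.support_nil, List.mem_singleton]
    exact fun e => hbv e.symm
  | @cons a c b h q ih =>
    intro hp hbv
    obtain ⟨hq, hanot⟩ := (Walk.cons_isPath_iff h q).mp hp
    by_cases hav : a = v
    · exact ⟨c, Or.inr (hav ▸ h), q, hav ▸ hanot⟩
    · by_cases h5 : v ∈ q.support
      · obtain ⟨x, hx, q', hq'⟩ := ih hq hbv
        rcases hx with rfl | hvx
        · refine ⟨a, Or.inl rfl, Walk.cons h q', ?_⟩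
          simp only [Walk.support_cons, List.mem_cons, not_or]
          exact ⟨fun e => hav e.symm, hq'⟩
        · exact ⟨x, Or.inr hvx, q', hq'⟩
      · refine ⟨a, Or.inl rfl, Walk.cons h q, ?_⟩
        simp only [Walk.support_cons, List.mem_cons, not_or]
        exact ⟨fun e => hav e.symm, h5⟩

lemma reachable_avoiding {G : SimpleGraph V} {v a b : V} (h : G.Reachable a b) (hbv : b ≠ v) :
    ∃ x, (x = a ∨ G.Adj v x) ∧ ∃ q : G.Walk x b, v ∉ q.support := by
  classical
  obtain ⟨p0⟩ := h
  obtain ⟨p, hp⟩ := p0.toPath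
  exact exists_walk_avoiding p hp hbv

/-- The 5-swap of type 1: on a chordless 5-circuit `v1⋯v5` whose four boundary edges at
`v1, v2, v3, v4` belong to `F` and lie in two distinct circuits `C1, C2`, with
`v2v3 ∈ C1` and `v1v5, v5v4 ∈ C2`, replacing `E(C5) ∩ F` by `v1v2, v3v4` merges `C1`
and `C2` into one circuit, makes `v5` an isolated vertex bounded to the merged circuit,
and decreases the cost by exactly 1. -/
theorem five_swap_type1 {V : Type*} [Fintype V] (G F : SimpleGraph V)
    (hcubic : IsCubic G) (hbridgeless : Bridgeless G) (hF : IsEvenFactor G F)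
    (v1 v2 v3 v4 v5 : V)
    (a12 : G.Adj v1 v2) (a23 : G.Adj v2 v3) (a34 : G.Adj v3 v4) (a45 : G.Adj v4 v5)
    (a51 : G.Adj v5 v1)
    (n13 : ¬ G.Adj v1 v3) (n14 : ¬ G.Adj v1 v4) (n24 : ¬ G.Adj v2 v4)
    (n25 : ¬ G.Adj v2 v5) (n35 : ¬ G.Adj v3 v5)
    (C1 C2 : Set V) (hC1 : IsCircuitOf F C1) (hC2 : IsCircuitOf F C2) (hne : C1 ≠ C2)
    (e23 : s(v2, v3) ∈ F.edgeSet) (m2 : v2 ∈ C1) (m3 : v3 ∈ C1)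
    (e15 : s(v1, v5) ∈ F.edgeSet) (e54 : s(v5, v4) ∈ F.edgeSet)
    (m1 : v1 ∈ C2) (m4 : v4 ∈ C2) (m5 : v5 ∈ C2)
    (e12 : s(v1, v2) ∉ F.edgeSet) (e34 : s(v3, v4) ∉ F.edgeSet)
    (hbd : ∀ e ∈ bdry G ({v1, v2, v3, v4, v5} : Set V),
      (∃ u : V, u ∈ e ∧ u ∈ ({v1, v2, v3, v4} : Set V)) → e ∈ F.edgeSet) :
    let F' := SimpleGraph.fromEdgeSet
      ((F.edgeSet \ {s(v2, v3), s(v1, v5), s(v5, v4)}) ∪ {s(v1, v2), s(v3, v4)})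
    IsEvenFactor G F' ∧
    (∃ C : Set V, IsCircuitOf F' C ∧ C1 ⊆ C ∧ C2 \ {v5} ⊆ C ∧
      deg F' v5 = 0 ∧ BoundedTo G F' C v5) ∧
    cost F - cost F' = 1 := by
  intro F'
  classical
  have fa23 : F.Adj v2 v3 := e23
  have fa15 : F.Adj v1 v5 := e15
  have fa54 : F.Adj v5 v4 := e54
  have nf12 : ¬ F.Adj v1 v2 := e12
  have nf34 : ¬ F.Adj v3 v4 := e34
  have hdisj : ∀ x, x ∈ C1 → x ∈ C2 → False := by
    intro x h1 h2
    exact hne ((circuit_eq hC1 h1).trans (circuit_eq hC2 h2).symm)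
  have d12 : v1 ≠ v2 := a12.ne
  have d23 : v2 ≠ v3 := a23.ne
  have d34 : v3 ≠ v4 := a34.ne
  have d45 : v4 ≠ v5 := a45.ne
  have d51 : v5 ≠ v1 := a51.ne
  have d13 : v1 ≠ v3 := fun h => hdisj v3 m3 (h ▸ m1)
  have d24 : v2 ≠ v4 := fun h => hdisj v2 m2 (h ▸ m4)
  have d25 : v2 ≠ v5 := fun h => hdisj v2 m2 (h ▸ m5)
  have d35 : v3 ≠ v5 := fun h => hdisj v3 m3 (h ▸ m5)
  have d14 : v1 ≠ v4 := fun h => n13 (h ▸ a34.symm)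
  -- adjacency characterisation of F'
  have hF'adj : ∀ x y : V, F'.Adj x y ↔
      ((F.Adj x y ∧ s(x, y) ≠ s(v2, v3) ∧ s(x, y) ≠ s(v1, v5) ∧ s(x, y) ≠ s(v5, v4))
        ∨ s(x, y) = s(v1, v2) ∨ s(x, y) = s(v3, v4)) := by
    intro x y
    constructor
    · intro h
      have h' := ((SimpleGraph.fromEdgeSet_adj _).mp h).1
      rcases h' with ⟨hmem, hnot⟩ | hmem
      · simp only [Set.mem_insert_iff, Set.mem_singleton_iff, not_or] at hnot
        exact Or.inl ⟨hmem, hnot.1, hnot.2.1, hnot.2.2⟩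
      · simp only [Set.mem_insert_iff, Set.mem_singleton_iff] at hmem
        exact Or.inr hmem
    · intro h
      apply (SimpleGraph.fromEdgeSet_adj _).mpr
      rcases h with ⟨hf, h1, h2, h3⟩ | h | h
      · exact ⟨Or.inl ⟨hf, by simp [h1, h2, h3]⟩, hf.ne⟩
      · refine ⟨Or.inr (by simp [h]), ?_⟩
        rcases Sym2.eq_iff.mp h with ⟨rfl, rfl⟩ | ⟨rfl, rfl⟩
        · exact d12
        · exact d12.symm
      · refine ⟨Or.inr (by simp [h]), ?_⟩
        rcases Sym2.eq_iff.mp h with ⟨rfl, rfl⟩ | ⟨rfl, rfl⟩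
        · exact d34
        · exact d34.symm
  have hF'of : ∀ {x y : V}, F.Adj x y → s(x, y) ≠ s(v2, v3) → s(x, y) ≠ s(v1, v5) →
      s(x, y) ≠ s(v5, v4) → F'.Adj x y := by
    intro x y hf h1 h2 h3
    exact (hF'adj x y).mpr (Or.inl ⟨hf, h1, h2, h3⟩)
  have hF'to : ∀ {x y : V}, F'.Adj x y →
      (F.Adj x y ∧ s(x, y) ≠ s(v2, v3) ∧ s(x, y) ≠ s(v1, v5) ∧ s(x, y) ≠ s(v5, v4))
        ∨ s(x, y) = s(v1, v2) ∨ s(x, y) = s(v3, v4) := fun h => (hF'adj _ _).mp h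
  have f'12 : F'.Adj v1 v2 := (hF'adj v1 v2).mpr (Or.inr (Or.inl rfl))
  have f'34 : F'.Adj v3 v4 := (hF'adj v3 v4).mpr (Or.inr (Or.inr rfl))
  -- degrees in F
  have hdeg2 : ∀ {v u : V}, F.Adj v u → deg F v = 2 :=
    fun h => (hF.2 _).resolve_left (deg_ne_zero_of_adj h)
  have dg1 : deg F v1 = 2 := hdeg2 fa15
  have dg2 : deg F v2 = 2 := hdeg2 fa23
  have dg3 : deg F v3 = 2 := hdeg2 fa23.symm
  have dg4 : deg F v4 = 2 := hdeg2 fa54.symm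
  have dg5 : deg F v5 = 2 := hdeg2 fa54
  obtain ⟨w1, hw1v5, hnb1⟩ := nb_pair dg1 (show v5 ∈ F.neighborSet v1 from fa15)
  obtain ⟨w2, hw2v3, hnb2⟩ := nb_pair dg2 (show v3 ∈ F.neighborSet v2 from fa23)
  obtain ⟨w3, hw3v2, hnb3⟩ := nb_pair dg3 (show v2 ∈ F.neighborSet v3 from fa23.symm)
  obtain ⟨w4, hw4v5, hnb4⟩ := nb_pair dg4 (show v5 ∈ F.neighborSet v4 from fa54.symm)
  have nb5 : F.neighborSet v5 = {v1, v4} := by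
    obtain ⟨b, hb, hset⟩ := nb_pair dg5 (show v1 ∈ F.neighborSet v5 from fa15.symm)
    have h4 : v4 ∈ ({v1, b} : Set V) := hset ▸ (show v4 ∈ F.neighborSet v5 from fa54)
    rcases h4 with h4 | h4
    · exact absurd h4.symm d14
    · rw [hset, ← h4]
  have faw1 : F.Adj v1 w1 := by
    have h : w1 ∈ F.neighborSet v1 := by rw [hnb1]; exact Or.inr rfl
    exact h
  have faw2 : F.Adj v2 w2 := by
    have h : w2 ∈ F.neighborSet v2 := by rw [hnb2]; exact Or.inr rfl
    exact h
  have faw3 : F.Adj v3 w3 := by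
    have h : w3 ∈ F.neighborSet v3 := by rw [hnb3]; exact Or.inr rfl
    exact h
  have faw4 : F.Adj v4 w4 := by
    have h : w4 ∈ F.neighborSet v4 := by rw [hnb4]; exact Or.inr rfl
    exact h
  have hw1v2 : w1 ≠ v2 := fun h => nf12 (h ▸ faw1)
  have hw2v1 : w2 ≠ v1 := fun h => nf12 ((h ▸ faw2).symm)
  have hw3v4 : w3 ≠ v4 := fun h => nf34 (h ▸ faw3)
  have hw4v3 : w4 ≠ v3 := fun h => nf34 ((h ▸ faw4).symm)
  have hmem1 : ∀ {y : V}, F.Adj v1 y → y = v5 ∨ y = w1 := by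
    intro y hy
    have h : y ∈ ({v5, w1} : Set V) := hnb1 ▸ hy
    exact h
  have hmem2 : ∀ {y : V}, F.Adj v2 y → y = v3 ∨ y = w2 := by
    intro y hy
    have h : y ∈ ({v3, w2} : Set V) := hnb2 ▸ hy
    exact h
  have hmem3 : ∀ {y : V}, F.Adj v3 y → y = v2 ∨ y = w3 := by
    intro y hy
    have h : y ∈ ({v2, w3} : Set V) := hnb3 ▸ hy
    exact h
  have hmem4 : ∀ {y : V}, F.Adj v4 y → y = v5 ∨ y = w4 := by
    intro y hy
    have h : y ∈ ({v5, w4} : Set V) := hnb4 ▸ hy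
    exact h
  have hmem5 : ∀ {y : V}, F.Adj v5 y → y = v1 ∨ y = v4 := by
    intro y hy
    have h : y ∈ ({v1, v4} : Set V) := nb5 ▸ hy
    exact h
  -- neighbour sets in F'
  have nb5' : F'.neighborSet v5 = ∅ := by
    ext y
    simp only [SimpleGraph.mem_neighborSet, Set.mem_empty_iff_false, iff_false]
    intro h
    rcases hF'to h with ⟨hf, h1, h2, h3⟩ | h | h
    · rcases hmem5 hf with rfl | rfl
      · exact h2 Sym2.eq_swap
      · exact h3 rfl
    · rcases Sym2.eq_iff.mp h with ⟨h4, -⟩ | ⟨h4, -⟩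
      · exact d51 h4
      · exact d25 h4.symm
    · rcases Sym2.eq_iff.mp h with ⟨h4, -⟩ | ⟨h4, -⟩
      · exact d35 h4.symm
      · exact d45 h4.symm
  have dg5' : deg F' v5 = 0 := by
    rw [deg, nb5']
    simp
  have nb1' : F'.neighborSet v1 = {v2, w1} := by
    ext y
    simp only [SimpleGraph.mem_neighborSet, Set.mem_insert_iff, Set.mem_singleton_iff]
    constructor
    · intro h
      rcases hF'to h with ⟨hf, h1, h2, h3⟩ | h | h
      · rcases hmem1 hf with rfl | rfl
        · exact absurd rfl h2
        · exact Or.inr rfl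
      · rcases Sym2.eq_iff.mp h with ⟨-, h5⟩ | ⟨h4, -⟩
        · exact Or.inl h5
        · exact absurd h4 d12
      · rcases Sym2.eq_iff.mp h with ⟨h4, -⟩ | ⟨h4, -⟩
        · exact absurd h4 d13
        · exact absurd h4 d14
    · rintro (rfl | rfl)
      · exact f'12
      · refine hF'of faw1 ?_ ?_ ?_
        · intro h
          rcases Sym2.eq_iff.mp h with ⟨h4, -⟩ | ⟨h4, -⟩
          · exact d12 h4
          · exact d13 h4
        · intro h
          rcases Sym2.eq_iff.mp h with ⟨-, h5⟩ | ⟨h4, -⟩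
          · exact hw1v5 h5
          · exact d51 h4.symm
        · intro h
          rcases Sym2.eq_iff.mp h with ⟨h4, -⟩ | ⟨h4, -⟩
          · exact d51 h4.symm
          · exact d14 h4
  have nb2' : F'.neighborSet v2 = {v1, w2} := by
    ext y
    simp only [SimpleGraph.mem_neighborSet, Set.mem_insert_iff, Set.mem_singleton_iff]
    constructor
    · intro h
      rcases hF'to h with ⟨hf, h1, h2, h3⟩ | h | h
      · rcases hmem2 hf with rfl | rfl
        · exact absurd rfl h1
        · exact Or.inr rfl
      · rcases Sym2.eq_iff.mp h with ⟨h4, -⟩ | ⟨-, h5⟩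
        · exact absurd h4 d12.symm
        · exact Or.inl h5
      · rcases Sym2.eq_iff.mp h with ⟨h4, -⟩ | ⟨h4, -⟩
        · exact absurd h4 d23
        · exact absurd h4 d24
    · rintro (rfl | rfl)
      · exact f'12.symm
      · refine hF'of faw2 ?_ ?_ ?_
        · intro h
          rcases Sym2.eq_iff.mp h with ⟨-, h5⟩ | ⟨h4, -⟩
          · exact hw2v3 h5
          · exact d23 h4
        · intro h
          rcases Sym2.eq_iff.mp h with ⟨h4, -⟩ | ⟨h4, -⟩
          · exact d12 h4.symm
          · exact d25 h4
        · intro h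
          rcases Sym2.eq_iff.mp h with ⟨h4, -⟩ | ⟨h4, -⟩
          · exact d25 h4
          · exact d24 h4
  have nb3' : F'.neighborSet v3 = {v4, w3} := by
    ext y
    simp only [SimpleGraph.mem_neighborSet, Set.mem_insert_iff, Set.mem_singleton_iff]
    constructor
    · intro h
      rcases hF'to h with ⟨hf, h1, h2, h3⟩ | h | h
      · rcases hmem3 hf with rfl | rfl
        · exact absurd Sym2.eq_swap h1
        · exact Or.inr rfl
      · rcases Sym2.eq_iff.mp h with ⟨h4, -⟩ | ⟨h4, -⟩
        · exact absurd h4 d13.symm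
        · exact absurd h4 d23.symm
      · rcases Sym2.eq_iff.mp h with ⟨-, h5⟩ | ⟨h4, -⟩
        · exact Or.inl h5
        · exact absurd h4 d34
    · rintro (rfl | rfl)
      · exact f'34
      · refine hF'of faw3 ?_ ?_ ?_
        · intro h
          rcases Sym2.eq_iff.mp h with ⟨h4, -⟩ | ⟨-, h5⟩
          · exact d23 h4.symm
          · exact hw3v2 h5
        · intro h
          rcases Sym2.eq_iff.mp h with ⟨h4, -⟩ | ⟨h4, -⟩
          · exact d13 h4.symm
          · exact d35 h4
        · intro h
          rcases Sym2.eq_iff.mp h with ⟨h4, -⟩ | ⟨h4, -⟩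
          · exact d35 h4
          · exact d34 h4
  have nb4' : F'.neighborSet v4 = {v3, w4} := by
    ext y
    simp only [SimpleGraph.mem_neighborSet, Set.mem_insert_iff, Set.mem_singleton_iff]
    constructor
    · intro h
      rcases hF'to h with ⟨hf, h1, h2, h3⟩ | h | h
      · rcases hmem4 hf with rfl | rfl
        · exact absurd Sym2.eq_swap h3
        · exact Or.inr rfl
      · rcases Sym2.eq_iff.mp h with ⟨h4, -⟩ | ⟨h4, -⟩
        · exact absurd h4 d14.symm
        · exact absurd h4 d24.symm
      · rcases Sym2.eq_iff.mp h with ⟨h4, -⟩ | ⟨-, h5⟩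
        · exact absurd h4 d34.symm
        · exact Or.inl h5
    · rintro (rfl | rfl)
      · exact f'34.symm
      · refine hF'of faw4 ?_ ?_ ?_
        · intro h
          rcases Sym2.eq_iff.mp h with ⟨h4, -⟩ | ⟨h4, -⟩
          · exact d24 h4.symm
          · exact d34 h4.symm
        · intro h
          rcases Sym2.eq_iff.mp h with ⟨h4, -⟩ | ⟨h4, -⟩
          · exact d14 h4.symm
          · exact d45 h4
        · intro h
          rcases Sym2.eq_iff.mp h with ⟨h4, -⟩ | ⟨-, h5⟩
          · exact d45 h4
          · exact hw4v5 h5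
  have dg1' : deg F' v1 = 2 := by
    rw [deg_eq_ncard, nb1', Set.ncard_pair (Ne.symm hw1v2)]
  have dg2' : deg F' v2 = 2 := by
    rw [deg_eq_ncard, nb2', Set.ncard_pair (Ne.symm hw2v1)]
  have dg3' : deg F' v3 = 2 := by
    rw [deg_eq_ncard, nb3', Set.ncard_pair (Ne.symm hw3v4)]
  have dg4' : deg F' v4 = 2 := by
    rw [deg_eq_ncard, nb4', Set.ncard_pair (Ne.symm hw4v3)]
  have hnb_out : ∀ x, x ≠ v1 → x ≠ v2 → x ≠ v3 → x ≠ v4 → x ≠ v5 →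
      F'.neighborSet x = F.neighborSet x := by
    intro x h1 h2 h3 h4 h5
    ext y
    simp only [SimpleGraph.mem_neighborSet]
    constructor
    · intro h
      rcases hF'to h with ⟨hf, -, -, -⟩ | h | h
      · exact hf
      · exfalso
        rcases Sym2.eq_iff.mp h with ⟨e, -⟩ | ⟨e, -⟩
        exacts [h1 e, h2 e]
      · exfalso
        rcases Sym2.eq_iff.mp h with ⟨e, -⟩ | ⟨e, -⟩
        exacts [h3 e, h4 e]
    · intro h
      refine hF'of h ?_ ?_ ?_
      · intro he
        rcases Sym2.eq_iff.mp he with ⟨e, -⟩ | ⟨e, -⟩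
        exacts [h2 e, h3 e]
      · intro he
        rcases Sym2.eq_iff.mp he with ⟨e, -⟩ | ⟨e, -⟩
        exacts [h1 e, h5 e]
      · intro he
        rcases Sym2.eq_iff.mp he with ⟨e, -⟩ | ⟨e, -⟩
        exacts [h5 e, h4 e]
  have hdeg_out : ∀ x, x ≠ v1 → x ≠ v2 → x ≠ v3 → x ≠ v4 → x ≠ v5 →
      deg F' x = deg F x := by
    intro x h1 h2 h3 h4 h5
    rw [deg, deg, hnb_out x h1 h2 h3 h4 h5]
  -- even factor
  have hEF' : IsEvenFactor G F' := by
    constructor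
    · intro x y h
      rcases hF'to h with ⟨hf, -, -, -⟩ | h | h
      · exact hF.1 hf
      · rcases Sym2.eq_iff.mp h with ⟨rfl, rfl⟩ | ⟨rfl, rfl⟩
        exacts [a12, a12.symm]
      · rcases Sym2.eq_iff.mp h with ⟨rfl, rfl⟩ | ⟨rfl, rfl⟩
        exacts [a34, a34.symm]
    · intro v
      by_cases h1 : v = v1
      · subst h1; right; exact dg1'
      by_cases h2 : v = v2
      · subst h2; right; exact dg2'
      by_cases h3 : v = v3
      · subst h3; right; exact dg3'
      by_cases h4 : v = v4
      · subst h4; right; exact dg4'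
      by_cases h5 : v = v5
      · subst h5; left; exact dg5'
      rw [hdeg_out v h1 h2 h3 h4 h5]
      exact hF.2 v
  -- component machinery
  have hC1eq : C1 = {u | F.Reachable v2 u} := circuit_eq hC1 m2
  have hC2eq : C2 = {u | F.Reachable v1 u} := circuit_eq hC2 m1
  have hC1cl : ∀ x y, x ∈ C1 → F.Adj x y → y ∈ C1 := by
    intro x y hx hxy
    rw [hC1eq] at hx ⊢
    exact hx.trans hxy.reachable
  have hC2cl : ∀ x y, x ∈ C2 → F.Adj x y → y ∈ C2 := by
    intro x y hx hxy
    rw [hC2eq] at hx ⊢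
    exact hx.trans hxy.reachable
  have hevF : ∀ v, Even (deg F v) := by
    intro v
    rcases hF.2 v with h | h <;> rw [h]
    · exact Even.zero
    · exact even_two
  have r23 : (F.deleteEdges {s(v2, v3)}).Reachable v2 v3 := even_no_bridge hevF fa23
  have hT1 : ∀ u, (F.deleteEdges {s(v2, v3)}).Reachable v2 u → F'.Reachable v2 u := by
    intro u h
    refine reach_transfer (P := fun x => x ∈ C1) ?_ ?_ m2 h
    · intro x y hx hxy
      exact hC1cl x y hx (SimpleGraph.deleteEdges_adj.mp hxy).1
    · intro x y hx hy hxy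
      obtain ⟨hf, hne'⟩ := SimpleGraph.deleteEdges_adj.mp hxy
      refine hF'of hf ?_ ?_ ?_
      · intro he
        exact hne' (by simp [he])
      · intro he
        rcases Sym2.eq_iff.mp he with ⟨e, -⟩ | ⟨e, -⟩
        · exact hdisj x hx (e ▸ m1)
        · exact hdisj x hx (e ▸ m5)
      · intro he
        rcases Sym2.eq_iff.mp he with ⟨e, -⟩ | ⟨e, -⟩
        · exact hdisj x hx (e ▸ m5)
        · exact hdisj x hx (e ▸ m4)
  have rC1 : ∀ u ∈ C1, F'.Reachable v2 u := by
    intro u hu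
    refine hT1 u (reach_patch r23 ?_)
    rw [hC1eq] at hu
    exact hu
  -- v4 ~ v1 in F'
  have r41 : F'.Reachable v4 v1 := by
    obtain ⟨p0⟩ := (even_no_bridge hevF fa15).symm
    obtain ⟨p, hp⟩ := p0.toPath
    cases p with
    | nil => exact absurd rfl d51
    | @cons _ x _ h q =>
      have hq5 : v5 ∉ q.support := ((Walk.cons_isPath_iff h q).mp hp).2
      obtain ⟨hf5x, hnotin⟩ := SimpleGraph.deleteEdges_adj.mp h
      have hx4 : x = v4 := by
        rcases hmem5 hf5x with rfl | rfl
        · exact absurd (by rw [Set.mem_singleton_iff]; exact Sym2.eq_swap) hnotin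
        · rfl
      subst x
      refine reach_of_walk q ?_
      intro a b ha hb hab
      obtain ⟨hfab, -⟩ := SimpleGraph.deleteEdges_adj.mp hab
      have ha5 : a ≠ v5 := fun e => hq5 (e ▸ ha)
      have hb5 : b ≠ v5 := fun e => hq5 (e ▸ hb)
      have haC2 : a ∈ C2 := by
        have hr : F.Reachable v4 a := ⟨(q.takeUntil a ha).mapLe (F.deleteEdges_le _)⟩
        rw [hC2eq]
        exact (fa15.reachable.trans fa54.reachable).trans hr
      refine hF'of hfab ?_ ?_ ?_
      · intro he
        rcases Sym2.eq_iff.mp he with ⟨e, -⟩ | ⟨e, -⟩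
        · exact hdisj a (e ▸ m2) haC2
        · exact hdisj a (e ▸ m3) haC2
      · intro he
        rcases Sym2.eq_iff.mp he with ⟨-, e⟩ | ⟨e, -⟩
        · exact hb5 e
        · exact ha5 e
      · intro he
        rcases Sym2.eq_iff.mp he with ⟨e, -⟩ | ⟨-, e⟩
        · exact ha5 e
        · exact hb5 e
  have hTC2 : ∀ {a b : V} (q : F.Walk a b), a ∈ C2 → v5 ∉ q.support → F'.Reachable a b := by
    intro a b q haC2 h5
    refine reach_of_walk q ?_
    intro x y hx hy hxy
    have hx5 : x ≠ v5 := fun e => h5 (e ▸ hx)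
    have hy5 : y ≠ v5 := fun e => h5 (e ▸ hy)
    have hxC2 : x ∈ C2 := by
      have hr : F.Reachable a x := ⟨q.takeUntil x hx⟩
      rw [hC2eq] at haC2 ⊢
      exact haC2.trans hr
    refine hF'of hxy ?_ ?_ ?_
    · intro he
      rcases Sym2.eq_iff.mp he with ⟨e, -⟩ | ⟨e, -⟩
      · exact hdisj x (e ▸ m2) hxC2
      · exact hdisj x (e ▸ m3) hxC2
    · intro he
      rcases Sym2.eq_iff.mp he with ⟨-, e⟩ | ⟨e, -⟩
      · exact hy5 e
      · exact hx5 e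
    · intro he
      rcases Sym2.eq_iff.mp he with ⟨e, -⟩ | ⟨-, e⟩
      · exact hx5 e
      · exact hy5 e
  have rC2 : ∀ u ∈ C2, u ≠ v5 → F'.Reachable v1 u := by
    intro u hu hu5
    have hr : F.Reachable v1 u := by rw [hC2eq] at hu; exact hu
    obtain ⟨x, hx, q, hq⟩ := reachable_avoiding hr hu5
    have hxC2 : x ∈ C2 := by
      rcases hx with rfl | hvx
      · exact m1
      · rcases hmem5 hvx with rfl | rfl
        exacts [m1, m4]
    have hxr : F'.Reachable v1 x := by
      rcases hx with rfl | hvx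
      · exact Reachable.refl _
      · rcases hmem5 hvx with rfl | rfl
        · exact Reachable.refl _
        · exact r41.symm
    exact hxr.trans (hTC2 q hxC2 hq)
  -- the merged circuit
  have hCnew : IsCircuitOf F' {u | F'.Reachable v2 u} := ⟨v2, by rw [dg2']; exact two_ne_zero, rfl⟩
  have hC1sub : C1 ⊆ {u | F'.Reachable v2 u} := fun u hu => rC1 u hu
  have hv2C2' : ∀ u ∈ C2, u ≠ v5 → F'.Reachable v2 u :=
    fun u hu h5 => (f'12.reachable.symm).trans (rC2 u hu h5)
  have hC2sub : C2 \ {v5} ⊆ {u | F'.Reachable v2 u} := fun u hu => hv2C2' u hu.1 hu.2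
  have hbound : BoundedTo G F' {u | F'.Reachable v2 u} v5 :=
    BoundedTo.two_in v5 v1 v4 dg5' d14 a51 a45.symm f'12.reachable.symm (hv2C2' v4 m4 d45)
  -- counting circuits
  have hEdgeOut : ∀ x y, x ∉ C1 → x ∉ C2 → F.Adj x y → F'.Adj x y := by
    intro x y h1 h2 hf
    refine hF'of hf ?_ ?_ ?_
    · intro he
      rcases Sym2.eq_iff.mp he with ⟨e, -⟩ | ⟨e, -⟩
      · exact h1 (e ▸ m2)
      · exact h1 (e ▸ m3)
    · intro he
      rcases Sym2.eq_iff.mp he with ⟨e, -⟩ | ⟨e, -⟩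
      · exact h2 (e ▸ m1)
      · exact h2 (e ▸ m5)
    · intro he
      rcases Sym2.eq_iff.mp he with ⟨e, -⟩ | ⟨e, -⟩
      · exact h2 (e ▸ m5)
      · exact h2 (e ▸ m4)
  have hEdgeOut' : ∀ x y, x ∉ C1 → x ∉ C2 → F'.Adj x y → F.Adj x y := by
    intro x y h1 h2 h
    rcases hF'to h with ⟨hf, -, -, -⟩ | he | he
    · exact hf
    · exfalso
      rcases Sym2.eq_iff.mp he with ⟨e, -⟩ | ⟨e, -⟩
      · exact h2 (e ▸ m1)
      · exact h1 (e ▸ m2)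
    · exfalso
      rcases Sym2.eq_iff.mp he with ⟨e, -⟩ | ⟨e, -⟩
      · exact h1 (e ▸ m3)
      · exact h2 (e ▸ m4)
  have hOutReach : ∀ w, w ∉ C1 → w ∉ C2 → ∀ u, F.Reachable w u ↔ F'.Reachable w u := by
    intro w h1 h2 u
    constructor
    · refine reach_transfer (P := fun x => x ∉ C1 ∧ x ∉ C2) ?_ ?_ ⟨h1, h2⟩
      · intro x y hx hxy
        exact ⟨fun hy => hx.1 (hC1cl y x hy hxy.symm), fun hy => hx.2 (hC2cl y x hy hxy.symm)⟩
      · intro x y hx _ hxy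
        exact hEdgeOut x y hx.1 hx.2 hxy
    · refine reach_transfer (P := fun x => x ∉ C1 ∧ x ∉ C2) ?_ ?_ ⟨h1, h2⟩
      · intro x y hx hxy
        have hf := hEdgeOut' x y hx.1 hx.2 hxy
        exact ⟨fun hy => hx.1 (hC1cl y x hy hf.symm), fun hy => hx.2 (hC2cl y x hy hf.symm)⟩
      · intro x y hx _ hxy
        exact hEdgeOut' x y hx.1 hx.2 hxy
  have hdegOutC : ∀ w, w ∉ C1 → w ∉ C2 → deg F' w = deg F w := by
    intro w h1 h2
    refine hdeg_out w ?_ ?_ ?_ ?_ ?_ <;> rintro rfl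
    exacts [h2 m1, h1 m2, h1 m3, h2 m4, h2 m5]
  have hSC : {C : Set V | IsCircuitOf F' C}
      = insert {u | F'.Reachable v2 u} ({C : Set V | IsCircuitOf F C} \ {C1, C2}) := by
    ext C
    simp only [Set.mem_setOf_eq, Set.mem_insert_iff, Set.mem_diff, Set.mem_singleton_iff, not_or]
    constructor
    · rintro ⟨w, hw0, rfl⟩
      by_cases hw1 : w ∈ C1
      · left
        have hr : F'.Reachable v2 w := rC1 w hw1
        ext u
        exact ⟨fun h => hr.trans h, fun h => hr.symm.trans h⟩
      by_cases hw2 : w ∈ C2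
      · left
        have hw5 : w ≠ v5 := fun e => hw0 (e ▸ dg5')
        have hr : F'.Reachable v2 w := hv2C2' w hw2 hw5
        ext u
        exact ⟨fun h => hr.trans h, fun h => hr.symm.trans h⟩
      · right
        have hdw : deg F w ≠ 0 := by rw [← hdegOutC w hw1 hw2]; exact hw0
        refine ⟨⟨w, hdw, Set.ext fun u => (hOutReach w hw1 hw2 u).symm⟩, ?_, ?_⟩
        · intro hC
          exact hw1 (hC ▸ (Reachable.refl w : F'.Reachable w w))
        · intro hC
          exact hw2 (hC ▸ (Reachable.refl w : F'.Reachable w w))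
    · rintro (rfl | ⟨⟨w, hw0, rfl⟩, hne1, hne2⟩)
      · exact hCnew
      · have hw1 : w ∉ C1 := fun h => hne1 ((circuit_eq hC1 h).symm)
        have hw2 : w ∉ C2 := fun h => hne2 ((circuit_eq hC2 h).symm)
        exact ⟨w, by rw [hdegOutC w hw1 hw2]; exact hw0,
          Set.ext fun u => (hOutReach w hw1 hw2 u)⟩
  have hCnewNot : {u | F'.Reachable v2 u} ∉ ({C : Set V | IsCircuitOf F C} \ {C1, C2}) := by
    rintro ⟨hcirc, hne12⟩
    have hv2 : v2 ∈ {u | F'.Reachable v2 u} := Reachable.refl v2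
    exact hne12 (Or.inl ((circuit_eq hcirc hv2).trans (circuit_eq hC1 m2).symm))
  have hnc' : numCirc F' = ({C : Set V | IsCircuitOf F' C}).ncard :=
    Nat.card_coe_set_eq _
  have hnc : numCirc F = ({C : Set V | IsCircuitOf F C}).ncard :=
    Nat.card_coe_set_eq _
  have hsub12 : ({C1, C2} : Set (Set V)) ⊆ {C : Set V | IsCircuitOf F C} := by
    rintro C (rfl | rfl)
    exacts [hC1, hC2]
  have hfin : ({C : Set V | IsCircuitOf F C}).Finite := Set.toFinite _
  have hd2 : ({C1, C2} : Set (Set V)).ncard = 2 := Set.ncard_pair hne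
  have hdiff : ({C : Set V | IsCircuitOf F C} \ {C1, C2}).ncard
      = ({C : Set V | IsCircuitOf F C}).ncard - 2 := by
    rw [Set.ncard_diff hsub12 (Set.toFinite _), hd2]
  have hge2 : 2 ≤ ({C : Set V | IsCircuitOf F C}).ncard := by
    rw [← hd2]
    exact Set.ncard_le_ncard hsub12 hfin
  have hins : ({C : Set V | IsCircuitOf F' C}).ncard
      = ({C : Set V | IsCircuitOf F C} \ {C1, C2}).ncard + 1 := by
    rw [hSC, Set.ncard_insert_of_notMem hCnewNot (Set.toFinite _)]
  have hnumC : numCirc F = numCirc F' + 1 := by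
    rw [hnc, hnc', hins, hdiff]
    omega
  -- counting isolated vertices
  have hisoset : {v : V | deg F' v = 0} = insert v5 {v : V | deg F v = 0} := by
    ext x
    simp only [Set.mem_setOf_eq, Set.mem_insert_iff]
    by_cases h1 : x = v1
    · subst h1; simp [dg1', dg1, Ne.symm d51]
    by_cases h2 : x = v2
    · subst h2; simp [dg2', dg2, d25]
    by_cases h3 : x = v3
    · subst h3; simp [dg3', dg3, d35]
    by_cases h4 : x = v4
    · subst h4; simp [dg4', dg4, d45]
    by_cases h5 : x = v5
    · subst h5; simp [dg5']
    · rw [hdeg_out x h1 h2 h3 h4 h5]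
      simp [h5]
  have hv5not : v5 ∉ {v : V | deg F v = 0} := by simp [dg5]
  have hni' : numIso F' = ({v : V | deg F' v = 0}).ncard := Nat.card_coe_set_eq _
  have hni : numIso F = ({v : V | deg F v = 0}).ncard := Nat.card_coe_set_eq _
  have hnumI : numIso F' = numIso F + 1 := by
    rw [hni, hni', hisoset, Set.ncard_insert_of_notMem hv5not (Set.toFinite _)]
  refine ⟨hEF', ⟨{u | F'.Reachable v2 u}, hCnew, hC1sub, hC2sub, dg5', hbound⟩, ?_⟩
  simp only [cost]
  rw [hnumC, hnumI]
  push_cast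
  ring
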